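/- Let F̄(n,k) = (-1)^k (4n+1)((1/2)_n)^3 (1/2)_{n+k} (1)_k / ((1)_n^3 (1)_{n-k} ((1/2)_k)^3) and Ḡ(n,k) = -16n³(n-k)(-1)^k ((1/2)_n)^3 (1/2)_{n+k} (1)_k / ((2k+1)^3 (1)_n^3 (1)_{n-k} ((1/2)_k)^3), over Q with the convention 1/(1)_{-j} = 0 for j > 0. Then for all integers n ≥ 0 and 0 ≤ k ≤ n, F̄(n,k+1) - F̄(n,k) = Ḡ(n+1,k) - Ḡ(n,k). -/
import Mathlib

open Polynomial

/-- Rising Pochhammer symbol over ℚ. -/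
noncomputable def poch (x : ℚ) (n : ℕ) : ℚ := (ascPochhammer ℚ n).eval x

/-- Rising Pochhammer symbol with integer index: `(x)_{-k} = 1/(x-k)_k` for `k > 0`;
in particular `(1)_{-k} = 0` for `k > 0`. -/
noncomputable def pochZ (x : ℚ) (m : ℤ) : ℚ :=
  if 0 ≤ m then (ascPochhammer ℚ m.toNat).eval x
  else 1 / (ascPochhammer ℚ (-m).toNat).eval (x + m)

/-- `F̄(n,k)` for Van Hamme (C.2). -/
noncomputable def FbarC2 (n k : ℕ) : ℚ :=
  (-1)^k * (4*n+1) * (poch (1/2) n)^3 * poch (1/2) (n+k) * poch 1 k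
    / ((poch 1 n)^3 * pochZ 1 ((n : ℤ) - k) * (poch (1/2) k)^3)

/-- `Ḡ(n,k)` for Van Hamme (C.2). -/
noncomputable def GbarC2 (n k : ℕ) : ℚ :=
  -(16 * n^3 * ((n : ℚ) - k) * (-1)^k * (poch (1/2) n)^3 * poch (1/2) (n+k) * poch 1 k)
    / ((2*k+1)^3 * (poch 1 n)^3 * pochZ 1 ((n : ℤ) - k) * (poch (1/2) k)^3)

lemma poch_succ (x : ℚ) (n : ℕ) : poch x (n+1) = poch x n * (x + n) := by
  simp [poch, ascPochhammer_succ_eval]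

lemma poch_zero (x : ℚ) : poch x 0 = 1 := by simp [poch]

lemma poch_pos (x : ℚ) (hx : 0 < x) (n : ℕ) : 0 < poch x n :=
  ascPochhammer_pos n x hx

lemma pochZ_natCast (m : ℕ) : pochZ 1 (m : ℤ) = poch 1 m := by
  simp [pochZ, poch]

lemma pochZ_neg_one : pochZ 1 (-1) = 0 := by
  norm_num [pochZ]

/-- the WZ pair for Van Hamme (C.2):
`F̄(n,k+1) - F̄(n,k) = Ḡ(n+1,k) - Ḡ(n,k)` for `0 ≤ k ≤ n`. -/
theorem wz_pair_C2 (n k : ℕ) (hk : k ≤ n) :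
    FbarC2 n (k+1) - FbarC2 n k = GbarC2 (n+1) k - GbarC2 n k := by
  rcases hk.eq_or_lt with rfl | hlt
  · -- case n = k
    have h1 : ((k:ℤ) - (k+1:ℕ)) = -1 := by push_cast; ring
    have h2 : ((k:ℤ) - k) = ((0:ℕ) : ℤ) := by push_cast; ring
    have h3 : (((k:ℕ)+1 : ℕ) : ℤ) - k = ((1:ℕ) : ℤ) := by push_cast; ring
    have e1 : k + (k+1) = (k+k) + 1 := by ring
    have e2 : (k+1) + k = (k+k) + 1 := by ring
    simp only [FbarC2, GbarC2, h1, h2, h3, pochZ_neg_one, pochZ_natCast, e1, e2,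
      poch_succ, poch_zero]
    have hA := (poch_pos (1/2) (by norm_num) k).ne'
    have hB := (poch_pos 1 (by norm_num) k).ne'
    have hE := (poch_pos (1/2) (by norm_num) (k+k)).ne'
    have h2k : (2*(k:ℚ)+1) ≠ 0 := by positivity
    have hkk : ((k:ℚ)+k) + 1/2 ≠ 0 := by positivity
    push_cast
    field_simp
    ring
  · obtain ⟨m, rfl⟩ : ∃ m, n = k + 1 + m := ⟨n - (k+1), by omega⟩
    have h1 : (((k+1+m:ℕ):ℤ) - (k+1:ℕ)) = ((m:ℕ) : ℤ) := by push_cast; ring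
    have h2 : (((k+1+m:ℕ):ℤ) - k) = ((m+1:ℕ) : ℤ) := by push_cast; ring
    have h3 : (((k+1+m+1:ℕ):ℤ) - k) = ((m+2:ℕ) : ℤ) := by push_cast; ring
    have e1 : (k+1+m) + (k+1) = ((k+1+m)+k) + 1 := by ring
    have e2 : (k+1+m+1) + k = ((k+1+m)+k) + 1 := by ring
    have e3 : m + 2 = (m+1) + 1 := by ring
    have e4 : m + 1 = m + 1 := rfl
    simp only [FbarC2, GbarC2, h1, h2, h3, pochZ_natCast, e1, e2, e3,
      poch_succ, poch_zero]
    have hA := (poch_pos (1/2) (by norm_num) (k+1+m)).ne'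
    have hB := (poch_pos 1 (by norm_num) (k+1+m)).ne'
    have hC := (poch_pos (1/2) (by norm_num) k).ne'
    have hD := (poch_pos 1 (by norm_num) k).ne'
    have hE := (poch_pos (1/2) (by norm_num) ((k+1+m)+k)).ne'
    have hF := (poch_pos 1 (by norm_num) m).ne'
    have h2k : (2*(k:ℚ)+1) ≠ 0 := by positivity
    push_cast
    field_simp
    ring
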